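/- arXiv:2209.04181 — 4 statements merged into one kernel-verified Lean document; each statement's English description precedes it below -/
import Mathlib

section
/- For two floating point bit vectors X, Y of length 1+j+x that have equal exponent fields and equal sign bits, |FP(X)| > |FP(Y)| if and only if UI of the mantissa field of X exceeds UI of the mantissa field of Y, which in turn holds if and only if UI(X) > UI(Y). -/
/-- Unsigned integer interpretation of a bit vector. -/
def UI {k : ℕ} (B : Fin k → Bool) : ℕ :=
  ∑ i : Fin k, if B i then 2 ^ (i : ℕ) else 0

/-- Two's complement (signed integer) interpretation of a (k+1)-bit vector. -/
def SI {k : ℕ} (B : Fin (k + 1) → Bool) : ℤ :=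
  if B (Fin.last k) then
    -2 ^ k + ∑ i : Fin k, (if B i.castSucc then (2 : ℤ) ^ (i : ℕ) else 0)
  else (UI B : ℤ)

/-- Sign bit of a floating point bit vector of length x + j + 1. -/
def signBit (j x : ℕ) (B : Fin (x + j + 1) → Bool) : Bool := B (Fin.last (x + j))

/-- Unsigned value of the exponent field. -/
def expo (j x : ℕ) (B : Fin (x + j + 1) → Bool) : ℕ :=
  ∑ i : Fin j, if B ⟨x + (i : ℕ), by have := i.isLt; omega⟩ then 2 ^ (i : ℕ) else 0

/-- Unsigned value of the mantissa field. -/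
def mant (j x : ℕ) (B : Fin (x + j + 1) → Bool) : ℕ :=
  ∑ i : Fin x, if B ⟨(i : ℕ), by have := i.isLt; omega⟩ then 2 ^ (i : ℕ) else 0

/-- The exponent bias 2^(j-1) - 1. -/
def bias (j : ℕ) : ℤ := 2 ^ (j - 1) - 1

/-- Floating point magnitude (normalized if exponent field nonzero, else denormalized). -/
def mag (j x : ℕ) (B : Fin (x + j + 1) → Bool) : ℚ :=
  if expo j x B = 0 then
    (2 : ℚ) ^ ((1 : ℤ) - bias j) * (mant j x B) * (2 : ℚ) ^ (-(x : ℤ))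
  else
    (2 : ℚ) ^ ((expo j x B : ℤ) - bias j) * (1 + (mant j x B) * (2 : ℚ) ^ (-(x : ℤ)))

/-- Floating point interpretation, as a signed-magnitude value: the sign is paired
(lexicographically) with the (sign-adjusted) magnitude, so that -0 < +0. -/
def FP (j x : ℕ) (B : Fin (x + j + 1) → Bool) : ℤ ×ₗ ℚ :=
  toLex (if signBit j x B then ((0 : ℤ), -(mag j x B)) else ((1 : ℤ), mag j x B))

/-- The floating point value +0. -/
def fpZero : ℤ ×ₗ ℚ := toLex ((1 : ℤ), (0 : ℚ))

/-- Mask with only the most significant bit set. -/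
def mask (k : ℕ) : Fin (k + 1) → Bool := fun i => decide (i = Fin.last k)

/-- Bitwise XOR of two bit vectors. -/
def xorVec {k : ℕ} (X Y : Fin k → Bool) : Fin k → Bool := fun i => xor (X i) (Y i)

/-- Negation of a floating point value: swap the sign, keep the magnitude. -/
def fpNeg (p : ℤ ×ₗ ℚ) : ℤ ×ₗ ℚ := toLex (1 - (ofLex p).1, -(ofLex p).2)

lemma UI_decomp (j x : ℕ) (B : Fin (x + j + 1) → Bool) :
    UI B = mant j x B + 2 ^ x * expo j x B +
      (if signBit j x B then 2 ^ (x + j) else 0) := by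
  classical
  set B' : ℕ → Bool := fun i => if h : i < x + j + 1 then B ⟨i, h⟩ else false with hB'
  set g : ℕ → ℕ := fun i => if B' i then 2 ^ i else 0 with hg
  have hUI : UI B = ∑ i ∈ Finset.range (x + j + 1), g i := by
    rw [← Fin.sum_univ_eq_sum_range]
    apply Finset.sum_congr rfl
    intro i _
    simp [hg, hB', i.isLt, (by omega : (i : ℕ) ≤ x + j)]
  have hmant : mant j x B = ∑ i ∈ Finset.range x, g i := by
    unfold mant
    rw [← Fin.sum_univ_eq_sum_range]
    apply Finset.sum_congr rfl
    intro i _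
    have hi : (i : ℕ) < x + j + 1 := by omega
    simp [hg, hB', hi, (by omega : (i : ℕ) ≤ x + j)]
  have hexpo : 2 ^ x * expo j x B = ∑ i ∈ Finset.range j, g (x + i) := by
    unfold expo
    rw [Finset.mul_sum, ← Fin.sum_univ_eq_sum_range]
    apply Finset.sum_congr rfl
    intro i _
    have hi : x + (i : ℕ) < x + j + 1 := by omega
    simp only [hg, hB', hi, dif_pos]
    rw [mul_ite, mul_zero, pow_add]
  have hsign : (if signBit j x B then 2 ^ (x + j) else 0) = g (x + j) := by
    have hi : x + j < x + j + 1 := by omega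
    simp [hg, hB', hi, signBit, Fin.last]
    rfl
  rw [hUI, hmant, hexpo, hsign, Finset.sum_range_succ, Finset.sum_range_add]

/-- with equal sign bits and equal exponent fields, the magnitude
comparison is decided by the mantissa field, which agrees with the unsigned
comparison of the full bit vectors. -/
theorem mag_gt_iff_mant_gt (j x : ℕ) (hj : 1 ≤ j) (X Y : Fin (x + j + 1) → Bool)
    (hs : signBit j x X = signBit j x Y) (he : expo j x X = expo j x Y) :
    (mag j x X > mag j x Y ↔ mant j x X > mant j x Y) ∧
    (mant j x X > mant j x Y ↔ UI X > UI Y) := by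
  have hdX := UI_decomp j x X
  have hdY := UI_decomp j x Y
  have h2 : (mant j x X > mant j x Y ↔ UI X > UI Y) := by
    rw [hdX, hdY, he, hs]
    omega
  refine ⟨?_, h2⟩
  have hx : (0:ℚ) < (2:ℚ) ^ (-(x:ℤ)) := by positivity
  unfold mag
  rw [he]
  by_cases h0 : expo j x Y = 0
  · simp only [h0, if_true]
    have hc : (0:ℚ) < (2:ℚ) ^ ((1:ℤ) - bias j) := by positivity
    rw [gt_iff_lt, mul_assoc, mul_assoc, mul_comm ((mant j x X : ℚ)),
      mul_comm ((mant j x Y : ℚ)), mul_lt_mul_iff_right₀ hc, mul_lt_mul_iff_right₀ hx, Nat.cast_lt]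
  · simp only [h0, if_false]
    have hc : (0:ℚ) < (2:ℚ) ^ ((expo j x Y : ℤ) - bias j) := by positivity
    rw [gt_iff_lt, mul_lt_mul_iff_right₀ hc, add_lt_add_iff_left,
      mul_lt_mul_iff_left₀ hx, Nat.cast_lt]
end

section
/- For any two k-bit vectors X, Y (k = 1+j+x) with the same sign bit, interpreted both as floating point and as two's complement integers: |FP(X)| > |FP(Y)| if and only if SI(X) > SI(Y). (Lemma 2 of the paper: the integer ordering of the raw bits refines the floating point magnitude ordering when sign bits agree.) -/
/-!
Below the sign bit, the bits of a float read as an unsigned integer `n = 2 ^ x * E + M`. Measured in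
units of the smallest subnormal `2 ^ (1 - bias - x)`, the magnitude is `significand x n`: equal to
`n` while `E = 0`, and `2 ^ (E - 1) * (2 ^ x + M)` otherwise. This is strictly increasing in `n`,
since a carry from the mantissa into the exponent lands exactly on the next binade. With equal sign
bits, `SI` differs from `n` by the same constant on both sides.
-/

lemma UI_lt_two_pow {k : ℕ} (B : Fin k → Bool) : UI B < 2 ^ k :=
  calc UI B ≤ ∑ i : Fin k, 2 ^ (i : ℕ) := Finset.sum_le_sum fun i _ => by split <;> simp
    _ = ∑ i ∈ Finset.range k, 2 ^ i := Fin.sum_univ_eq_sum_range (2 ^ ·) k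
    _ < 2 ^ k := Nat.geomSum_lt le_rfl (by simp)

lemma UI_eq_add_two_pow_mul {a b : ℕ} (B : Fin (a + b) → Bool) :
    UI B = UI (fun i : Fin a => B (Fin.castAdd b i))
      + 2 ^ a * UI (fun i : Fin b => B (Fin.natAdd a i)) := by
  rw [UI, Fin.sum_univ_add, UI, UI, Finset.mul_sum]
  congr 1
  refine Finset.sum_congr rfl fun i _ => ?_
  split <;> simp [pow_add]

lemma SI_eq_ite_add_UI {k : ℕ} (B : Fin (k + 1) → Bool) :
    SI B = (if B (Fin.last k) then -2 ^ k else 0) + (UI (fun i : Fin k => B i.castSucc) : ℤ) := by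
  rw [SI, UI, UI]
  split_ifs with h
  · push_cast; rfl
  · simp [Fin.sum_univ_castSucc, h]

lemma UI_castSucc_eq_expo_mant (j x : ℕ) (B : Fin (x + j + 1) → Bool) :
    UI (fun i : Fin (x + j) => B i.castSucc) = 2 ^ x * expo j x B + mant j x B := by
  rw [UI_eq_add_two_pow_mul, add_comm]
  rfl

def significand (x n : ℕ) : ℕ :=
  if n < 2 ^ x then n else 2 ^ (n / 2 ^ x - 1) * (2 ^ x + n % 2 ^ x)

lemma significand_two_pow_mul_add {x m : ℕ} (e : ℕ) (hm : m < 2 ^ x) :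
    significand x (2 ^ x * e + m) = if e = 0 then m else 2 ^ (e - 1) * (2 ^ x + m) := by
  have hdiv : (2 ^ x * e + m) / 2 ^ x = e := by
    rw [Nat.mul_add_div (by positivity), Nat.div_eq_of_lt hm, add_zero]
  have hmod : (2 ^ x * e + m) % 2 ^ x = m := by rw [Nat.mul_add_mod, Nat.mod_eq_of_lt hm]
  rcases Nat.eq_zero_or_pos e with rfl | he
  · simp [significand, hm]
  · have : ¬ 2 ^ x * e + m < 2 ^ x := by nlinarith
    simp [significand, this, hdiv, hmod, he.ne']

lemma significand_strictMono (x : ℕ) : StrictMono (significand x) := by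
  refine strictMono_nat_of_lt_succ fun n => ?_
  obtain ⟨e, m, hm, rfl⟩ : ∃ e m, m < 2 ^ x ∧ n = 2 ^ x * e + m :=
    ⟨n / 2 ^ x, n % 2 ^ x, Nat.mod_lt _ (by positivity), (Nat.div_add_mod n (2 ^ x)).symm⟩
  rw [significand_two_pow_mul_add e hm]
  rcases (show m + 1 ≤ 2 ^ x from hm).lt_or_eq with hm' | hm'
  · rw [add_assoc, significand_two_pow_mul_add e hm']
    split_ifs <;> simp
  · have : 2 ^ x * e + m + 1 = 2 ^ x * (e + 1) + 0 := by rw [add_assoc, hm']; ring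
    rw [this, significand_two_pow_mul_add (e + 1) (by positivity), if_neg e.succ_ne_zero,
      Nat.add_sub_cancel, add_zero]
    split_ifs with he
    · simpa [he] using hm
    · calc 2 ^ (e - 1) * (2 ^ x + m) < 2 ^ (e - 1) * (2 ^ x + 2 ^ x) := by gcongr
        _ = 2 ^ e * 2 ^ x := by
          rw [← two_mul, ← mul_assoc, ← pow_succ, Nat.sub_add_cancel (Nat.pos_of_ne_zero he)]

lemma mant_lt_two_pow (j x : ℕ) (B : Fin (x + j + 1) → Bool) : mant j x B < 2 ^ x :=
  UI_lt_two_pow _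

lemma mag_eq_significand (j x : ℕ) (B : Fin (x + j + 1) → Bool) :
    mag j x B = 2 ^ (1 - bias j - x) * significand x (UI fun i : Fin (x + j) => B i.castSucc) := by
  rw [UI_castSucc_eq_expo_mant, significand_two_pow_mul_add _ (mant_lt_two_pow j x B), mag]
  split_ifs with he
  · rw [sub_eq_add_neg (1 - bias j), zpow_add₀ two_ne_zero]
    ring
  · obtain ⟨e, he'⟩ := Nat.exists_eq_add_one_of_ne_zero he
    have hexp : ((e + 1 : ℕ) : ℤ) - bias j = (1 - bias j - x) + e + x := by push_cast; ring
    rw [he', hexp, Nat.add_sub_cancel, zpow_add₀ two_ne_zero, zpow_add₀ two_ne_zero,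
      zpow_natCast, zpow_natCast, zpow_neg, zpow_natCast]
    push_cast
    field_simp

theorem mag_gt_iff_si_gt_general (j x : ℕ) (X Y : Fin (x + j + 1) → Bool)
    (hs : signBit j x X = signBit j x Y) :
    mag j x X > mag j x Y ↔ SI X > SI Y := by
  have hsign : X (Fin.last (x + j)) = Y (Fin.last (x + j)) := hs
  rw [gt_iff_lt, gt_iff_lt, mag_eq_significand, mag_eq_significand,
    mul_lt_mul_iff_right₀ (by positivity), Nat.cast_lt, (significand_strictMono x).lt_iff_lt,
    SI_eq_ite_add_UI, SI_eq_ite_add_UI, hsign, add_lt_add_iff_left, Nat.cast_lt]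

/-- Lemma 2: with equal sign bits, the floating point magnitude
ordering coincides with the two's complement ordering of the raw bits. -/
theorem mag_gt_iff_si_gt (j x : ℕ) (hj : 1 ≤ j) (X Y : Fin (x + j + 1) → Bool)
    (hs : signBit j x X = signBit j x Y) :
    mag j x X > mag j x Y ↔ SI X > SI Y :=
  mag_gt_iff_si_gt_general j x X Y hs
end

section
/- For any two k-bit vectors X, Y both with sign bit 1 (negative), FP(X) > FP(Y) if and only if SI(X) < SI(Y): on negative floats, the floating point ordering is strictly reversed relative to the signed integer ordering of the same bits. -/
section Aux

lemma sum_bits_lt (n : ℕ) (b : ℕ → Bool) :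
    (∑ i ∈ Finset.range n, if b i then 2 ^ i else 0) < 2 ^ n := by
  induction n with
  | zero => simp
  | succ n ih =>
    rw [Finset.sum_range_succ]
    have h : (if b n then 2 ^ n else 0) ≤ 2 ^ n := by split <;> simp
    have h2 : 2 ^ (n + 1) = 2 * 2 ^ n := by ring
    omega

/-- scaled integer version of the magnitude -/
def Nval (x e m : ℕ) : ℕ := if e = 0 then 2 * m else 2 ^ e * (2 ^ x + m)

lemma Nval_lt {x e1 m1 e2 m2 : ℕ} (h1 : m1 < 2 ^ x) (h2 : m2 < 2 ^ x)
    (hk : e1 * 2 ^ x + m1 < e2 * 2 ^ x + m2) : Nval x e1 m1 < Nval x e2 m2 := by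
  unfold Nval
  rcases Nat.eq_zero_or_pos e1 with he1 | he1
  · rcases Nat.eq_zero_or_pos e2 with he2 | he2
    · subst he1 he2; simp only [reduceIte]; omega
    · rw [if_pos he1, if_neg (by omega)]
      calc 2 * m1 < 2 * 2 ^ x := by omega
        _ ≤ 2 ^ e2 * (2 ^ x + m2) := by
            have : 2 ≤ 2 ^ e2 := by
              calc 2 = 2 ^ 1 := rfl
                _ ≤ 2 ^ e2 := Nat.pow_le_pow_right (by norm_num) he2
            exact Nat.mul_le_mul this (by omega)
  · rcases Nat.eq_zero_or_pos e2 with he2 | he2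
    · exfalso
      subst he2
      have : 2 ^ x ≤ e1 * 2 ^ x := Nat.le_mul_of_pos_left _ he1
      omega
    · rw [if_neg (by omega), if_neg (by omega)]
      rcases lt_trichotomy e1 e2 with h | h | h
      · calc 2 ^ e1 * (2 ^ x + m1) < 2 ^ e1 * (2 * 2 ^ x) := by
              exact mul_lt_mul_of_pos_left (by omega) (Nat.pow_pos (n := e1) (by norm_num))
          _ = 2 ^ (e1 + 1) * 2 ^ x := by ring
          _ ≤ 2 ^ e2 * 2 ^ x := Nat.mul_le_mul_right _ (Nat.pow_le_pow_right (by norm_num) h)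
          _ ≤ 2 ^ e2 * (2 ^ x + m2) := Nat.mul_le_mul_left _ (by omega)
      · subst h
        have : m1 < m2 := by omega
        exact mul_lt_mul_of_pos_left (by omega) (Nat.pow_pos (n := e1) (by norm_num))
      · exfalso
        have : e2 + 1 ≤ e1 := h
        have h3 : (e2 + 1) * 2 ^ x ≤ e1 * 2 ^ x := Nat.mul_le_mul_right _ this
        have : e2 * 2 ^ x + 2 ^ x ≤ e1 * 2 ^ x := by nlinarith
        omega

lemma key_inj {p e1 m1 e2 m2 : ℕ} (hp : 0 < p) (h1 : m1 < p) (h2 : m2 < p)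
    (h : e1 * p + m1 = e2 * p + m2) : e1 = e2 ∧ m1 = m2 := by
  have d1 : (m1 + p * e1) / p = e1 := by
    rw [Nat.add_mul_div_left _ _ hp, Nat.div_eq_of_lt h1, Nat.zero_add]
  have d2 : (m2 + p * e2) / p = e2 := by
    rw [Nat.add_mul_div_left _ _ hp, Nat.div_eq_of_lt h2, Nat.zero_add]
  have hh : m1 + p * e1 = m2 + p * e2 := by linarith
  have he : e1 = e2 := by rw [← d1, ← d2, hh]
  subst he
  rw [mul_comm] at hh
  exact ⟨rfl, by linarith⟩

variable (j x : ℕ) (B : Fin (x + j + 1) → Bool)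

/-- totalized bit function -/
def Bf : ℕ → Bool := fun n => if h : n < x + j + 1 then B ⟨n, h⟩ else false

lemma mant_eq : mant j x B = ∑ i ∈ Finset.range x, if Bf j x B i then 2 ^ i else 0 := by
  rw [← Fin.sum_univ_eq_sum_range (fun n => if Bf j x B n then 2 ^ n else 0) x]
  unfold mant
  apply Finset.sum_congr rfl
  intro i _
  have hi : (i : ℕ) < x + j + 1 := by have := i.isLt; omega
  simp only [Bf, dif_pos hi]

lemma mant_lt : mant j x B < 2 ^ x := by
  rw [mant_eq]; exact sum_bits_lt x _

lemma expo_eq : expo j x B = ∑ i ∈ Finset.range j, if Bf j x B (x + i) then 2 ^ i else 0 := by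
  rw [← Fin.sum_univ_eq_sum_range (fun n => if Bf j x B (x + n) then 2 ^ n else 0) j]
  unfold expo
  apply Finset.sum_congr rfl
  intro i _
  have hi : x + (i : ℕ) < x + j + 1 := by have := i.isLt; omega
  simp only [Bf, dif_pos hi]

lemma low_sum_eq :
    (∑ i : Fin (x + j), (if B i.castSucc then (2 : ℤ) ^ (i : ℕ) else 0)) =
      ((expo j x B * 2 ^ x + mant j x B : ℕ) : ℤ) := by
  have h1 : (∑ i : Fin (x + j), (if B i.castSucc then (2 : ℤ) ^ (i : ℕ) else 0)) =
      ((∑ i ∈ Finset.range (x + j), if Bf j x B i then 2 ^ i else 0 : ℕ) : ℤ) := by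
    rw [← Fin.sum_univ_eq_sum_range (fun n => if Bf j x B n then 2 ^ n else 0) (x + j)]
    push_cast
    apply Finset.sum_congr rfl
    intro i _
    have hi : (i : ℕ) < x + j + 1 := by have := i.isLt; omega
    have hB : B i.castSucc = Bf j x B (i : ℕ) := by
      simp only [Bf, dif_pos hi]
      congr 1
    rw [hB]
  rw [h1]
  congr 1
  have he2 : (∑ i ∈ Finset.range j, if Bf j x B (x + i) then 2 ^ (x + i) else 0) =
      expo j x B * 2 ^ x := by
    rw [expo_eq, Finset.sum_mul]
    apply Finset.sum_congr rfl
    intro i _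
    split <;> simp [pow_add, mul_comm]
  rw [Finset.sum_range_add (fun n => if Bf j x B n then 2 ^ n else 0) x j,
    ← mant_eq, he2, add_comm]

lemma mag_eq_Nval (hj : 1 ≤ j) :
    mag j x B = (Nval x (expo j x B) (mant j x B) : ℚ) * (2 : ℚ) ^ (-(bias j) - x : ℤ) := by
  unfold mag Nval
  split
  · next h =>
    push_cast
    rw [zpow_sub₀ (two_ne_zero), zpow_sub₀ (two_ne_zero), zpow_one, zpow_neg, zpow_neg]
    field_simp
  · next h =>
    push_cast
    rw [zpow_sub₀ (two_ne_zero), zpow_sub₀ (two_ne_zero), zpow_neg, zpow_neg]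
    field_simp
    simp only [zpow_natCast]

end Aux

/-- on negative floats (sign bit 1), the floating point ordering
is strictly reversed relative to the signed integer ordering of the same bits. -/
theorem fp_gt_iff_si_lt_neg (j x : ℕ) (hj : 1 ≤ j) (X Y : Fin (x + j + 1) → Bool)
    (hsX : signBit j x X = true) (hsY : signBit j x Y = true) :
    FP j x X > FP j x Y ↔ SI X < SI Y := by
  have hmX := mant_lt j x X
  have hmY := mant_lt j x Y
  have hFP : (FP j x X > FP j x Y) ↔ mag j x X < mag j x Y := by
    unfold FP
    simp only [hsX, hsY, if_pos]
    rw [gt_iff_lt, Prod.Lex.lt_iff]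
    simp
  have hmag : mag j x X < mag j x Y ↔
      Nval x (expo j x X) (mant j x X) < Nval x (expo j x Y) (mant j x Y) := by
    rw [mag_eq_Nval j x X hj, mag_eq_Nval j x Y hj,
      mul_lt_mul_iff_of_pos_right (zpow_pos (by norm_num : (0:ℚ) < 2) _), Nat.cast_lt]
  have hNiff : Nval x (expo j x X) (mant j x X) < Nval x (expo j x Y) (mant j x Y) ↔
      expo j x X * 2 ^ x + mant j x X < expo j x Y * 2 ^ x + mant j x Y := by
    constructor
    · intro h
      rcases lt_trichotomy (expo j x X * 2 ^ x + mant j x X)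
        (expo j x Y * 2 ^ x + mant j x Y) with hk | hk | hk
      · exact hk
      · obtain ⟨he, hm⟩ := key_inj (Nat.pow_pos (n := x) (by norm_num)) hmX hmY hk
        rw [he, hm] at h
        exact absurd h (lt_irrefl _)
      · exact absurd h (not_lt.mpr (le_of_lt (Nval_lt hmY hmX hk)))
    · exact Nval_lt hmX hmY
  have hSI : SI X < SI Y ↔
      expo j x X * 2 ^ x + mant j x X < expo j x Y * 2 ^ x + mant j x Y := by
    unfold SI
    have hX' : X (Fin.last (x + j)) = true := hsX
    have hY' : Y (Fin.last (x + j)) = true := hsY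
    rw [if_pos hX', if_pos hY', low_sum_eq, low_sum_eq]
    constructor <;> intro h
    · have h2 := (add_lt_add_iff_left (-2 ^ (x + j) : ℤ)).mp h
      exact_mod_cast h2
    · exact (add_lt_add_iff_left _).mpr (by exact_mod_cast h)
  rw [hFP, hmag, hNiff, hSI]
end

section
/- (Case-split form of FLInt) For any two k-bit vectors X, Y: if FP(X) < 0 and FP(Y) < 0 and FP(X) ≠ FP(Y), then FP(X) ≥ FP(Y) ↔ SI(X) < SI(Y); in all other cases, FP(X) ≥ FP(Y) ↔ SI(X) ≥ SI(Y). -/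
namespace FlintAux

lemma sum_two_pow (n : ℕ) : ∑ i ∈ Finset.range n, 2 ^ i = 2 ^ n - 1 := by
  induction n with
  | zero => simp
  | succ n ih =>
    rw [Finset.sum_range_succ, ih]
    have : 1 ≤ 2 ^ n := Nat.one_le_two_pow
    have : 2 ^ (n + 1) = 2 * 2 ^ n := by rw [pow_succ]; ring
    omega

lemma mant_lt (j x : ℕ) (B : Fin (x + j + 1) → Bool) : mant j x B < 2 ^ x := by
  have h1 : mant j x B ≤ ∑ i : Fin x, 2 ^ (i : ℕ) := by
    apply Finset.sum_le_sum
    intro i _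
    split <;> simp
  rw [Fin.sum_univ_eq_sum_range (fun i => 2 ^ i) x, sum_two_pow] at h1
  have : 1 ≤ 2 ^ x := Nat.one_le_two_pow
  omega

lemma expo_lt (j x : ℕ) (B : Fin (x + j + 1) → Bool) : expo j x B < 2 ^ j := by
  have h1 : expo j x B ≤ ∑ i : Fin j, 2 ^ (i : ℕ) := by
    apply Finset.sum_le_sum
    intro i _
    split <;> simp
  rw [Fin.sum_univ_eq_sum_range (fun i => 2 ^ i) j, sum_two_pow] at h1
  have : 1 ≤ 2 ^ j := Nat.one_le_two_pow
  omega

/-- The unsigned value of the low x+j bits. -/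
def lowv (j x : ℕ) (B : Fin (x + j + 1) → Bool) : ℕ :=
  ∑ i : Fin (x + j), if B i.castSucc then 2 ^ (i : ℕ) else 0

lemma low_eq (j x : ℕ) (B : Fin (x + j + 1) → Bool) :
    lowv j x B = mant j x B + expo j x B * 2 ^ x := by
  unfold lowv mant expo
  rw [Fin.sum_univ_add, Finset.sum_mul]
  congr 1
  apply Finset.sum_congr rfl
  intro i _
  have h : (Fin.natAdd x i).castSucc = (⟨x + (i : ℕ), by have := i.isLt; omega⟩ :
      Fin (x + j + 1)) := by ext; simp
  rw [h]
  split
  · simp [pow_add, Nat.mul_comm]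
  · simp

lemma low_lt (j x : ℕ) (B : Fin (x + j + 1) → Bool) : lowv j x B < 2 ^ (x + j) := by
  rw [low_eq]
  have h1 := mant_lt j x B
  have h2 := expo_lt j x B
  have h3 : expo j x B * 2 ^ x ≤ (2 ^ j - 1) * 2 ^ x :=
    Nat.mul_le_mul_right _ (by omega)
  have h4 : (2 ^ j - 1) * 2 ^ x = 2 ^ j * 2 ^ x - 2 ^ x := by
    rw [Nat.sub_mul, one_mul]
  have h5 : 2 ^ (x + j) = 2 ^ j * 2 ^ x := by rw [pow_add, Nat.mul_comm]
  have h6 : 2 ^ x ≤ 2 ^ j * 2 ^ x := Nat.le_mul_of_pos_left _ (Nat.two_pow_pos _)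
  omega

lemma SI_eq (j x : ℕ) (B : Fin (x + j + 1) → Bool) :
    SI B = if B (Fin.last (x + j)) then -2 ^ (x + j) + (lowv j x B : ℤ)
           else (lowv j x B : ℤ) := by
  unfold SI lowv
  split
  · congr 1
    push_cast [apply_ite (Nat.cast : ℕ → ℤ)]
    rfl
  · next h =>
    congr 1
    unfold UI
    rw [Fin.sum_univ_castSucc]
    simp [h]

/-- Integer rescaling of the magnitude. -/
def g (x e m : ℕ) : ℕ := if e = 0 then m else 2 ^ (e + x - 1) + m * 2 ^ (e - 1)

lemma g_lt_g (x : ℕ) {e m e' m' : ℕ} (hm : m < 2 ^ x) (hm' : m' < 2 ^ x)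
    (h : m + e * 2 ^ x < m' + e' * 2 ^ x) : g x e m < g x e' m' := by
  have hee : e ≤ e' := by
    by_contra hc
    push_neg at hc
    have hb : m' + e' * 2 ^ x < m + e * 2 ^ x := by
      calc m' + e' * 2 ^ x < 2 ^ x + e' * 2 ^ x := by omega
        _ = (e' + 1) * 2 ^ x := by ring
        _ ≤ e * 2 ^ x := Nat.mul_le_mul_right _ (by omega)
        _ ≤ m + e * 2 ^ x := by omega
    omega
  rcases eq_or_lt_of_le hee with he | he
  · subst he
    have hmm : m < m' := by
      have := Nat.lt_of_add_lt_add_right (by omega : m + e * 2 ^ x < m' + e * 2 ^ x)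
      omega
    by_cases he0 : e = 0
    · simpa [g, he0] using hmm
    · simp only [g, he0, if_false]
      exact Nat.add_lt_add_left ((Nat.mul_lt_mul_right (Nat.two_pow_pos _)).mpr hmm) _
  · have h1 : g x e m < 2 ^ (e + x) := by
      by_cases he0 : e = 0
      · simp only [g, he0, if_true, zero_add]
        simpa [he0] using hm
      · simp only [g, he0, if_false]
        have hE : 1 ≤ e := Nat.pos_of_ne_zero he0
        have step : m * 2 ^ (e - 1) < 2 ^ x * 2 ^ (e - 1) :=
          (Nat.mul_lt_mul_right (Nat.two_pow_pos _)).mpr hm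
        have hxe : 2 ^ x * 2 ^ (e - 1) = 2 ^ (e + x - 1) := by
          rw [← pow_add]; congr 1; omega
        have hdbl : 2 ^ (e + x - 1) + 2 ^ (e + x - 1) = 2 ^ (e + x) := by
          rw [← two_mul, ← pow_succ']
          congr 1; omega
        omega
    have h2 : 2 ^ (e + x) ≤ g x e' m' := by
      have he'0 : e' ≠ 0 := by omega
      simp only [g, he'0, if_false]
      calc 2 ^ (e + x) ≤ 2 ^ (e' + x - 1) := Nat.pow_le_pow_right (by norm_num) (by omega)
        _ ≤ 2 ^ (e' + x - 1) + m' * 2 ^ (e' - 1) := Nat.le_add_right _ _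
    omega

lemma g_eq_div_mod (x e m : ℕ) (hm : m < 2 ^ x) :
    g x e m = g x ((m + e * 2 ^ x) / 2 ^ x) ((m + e * 2 ^ x) % 2 ^ x) := by
  have hp : 0 < 2 ^ x := Nat.two_pow_pos _
  rw [Nat.add_mul_div_right _ _ hp, Nat.div_eq_of_lt hm, zero_add,
    Nat.add_mul_mod_self_right, Nat.mod_eq_of_lt hm]

lemma G_strictMono (x : ℕ) : StrictMono (fun n => g x (n / 2 ^ x) (n % 2 ^ x)) := by
  intro a b h
  have hp : 0 < 2 ^ x := Nat.two_pow_pos _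
  exact g_lt_g x (Nat.mod_lt _ hp) (Nat.mod_lt _ hp)
    (by rw [Nat.mod_add_div', Nat.mod_add_div']; exact h)

lemma mag_eq (j x : ℕ) (B : Fin (x + j + 1) → Bool) :
    mag j x B = (g x (expo j x B) (mant j x B) : ℚ) *
      (2 : ℚ) ^ ((1 : ℤ) - bias j - x) := by
  have h2 : (2 : ℚ) ≠ 0 := by norm_num
  unfold mag g
  by_cases he : expo j x B = 0
  · simp only [he, if_true]
    rw [show (1 : ℤ) - bias j - x = (1 - bias j) + (-(x : ℤ)) by ring, zpow_add₀ h2]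
    ring
  · simp only [he, if_false]
    have hE : 1 ≤ expo j x B := Nat.pos_of_ne_zero he
    set e := expo j x B
    set m := mant j x B
    have c1 : ((2 ^ (e + x - 1) + m * 2 ^ (e - 1) : ℕ) : ℚ)
        = (2 : ℚ) ^ ((e : ℤ) + x - 1) + (m : ℚ) * (2 : ℚ) ^ ((e : ℤ) - 1) := by
      push_cast
      rw [← zpow_natCast (2 : ℚ) (e + x - 1), ← zpow_natCast (2 : ℚ) (e - 1),
        show ((e + x - 1 : ℕ) : ℤ) = (e : ℤ) + x - 1 by omega,
        show ((e - 1 : ℕ) : ℤ) = (e : ℤ) - 1 by omega]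
    rw [c1, mul_add, mul_one, add_mul, mul_assoc,
      mul_left_comm ((2 : ℚ) ^ ((e : ℤ) - bias j)),
      ← zpow_add₀ h2, ← zpow_add₀ h2, ← zpow_add₀ h2,
      show (e : ℤ) + x - 1 + (1 - bias j - x) = (e : ℤ) - bias j by ring,
      show (e : ℤ) - 1 + (1 - bias j - x) = (e : ℤ) - bias j + -(x : ℤ) by ring]

lemma mag_lt_iff (j x : ℕ) (X Y : Fin (x + j + 1) → Bool) :
    mag j x X < mag j x Y ↔ lowv j x X < lowv j x Y := by
  rw [mag_eq, mag_eq, mul_lt_mul_iff_of_pos_right (by positivity), Nat.cast_lt,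
    g_eq_div_mod x _ _ (mant_lt j x X), g_eq_div_mod x _ _ (mant_lt j x Y),
    (G_strictMono x).lt_iff_lt, low_eq, low_eq]

lemma mag_le_iff (j x : ℕ) (X Y : Fin (x + j + 1) → Bool) :
    mag j x X ≤ mag j x Y ↔ lowv j x X ≤ lowv j x Y := by
  rw [← not_lt, ← not_lt, mag_lt_iff]

lemma mag_eq_iff (j x : ℕ) (X Y : Fin (x + j + 1) → Bool) :
    mag j x X = mag j x Y ↔ lowv j x X = lowv j x Y := by
  rw [le_antisymm_iff, le_antisymm_iff, mag_le_iff, mag_le_iff]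

lemma mag_nonneg (j x : ℕ) (B : Fin (x + j + 1) → Bool) : 0 ≤ mag j x B := by
  rw [mag_eq]; positivity

lemma neg_iff (j x : ℕ) (B : Fin (x + j + 1) → Bool) :
    FP j x B < fpZero ↔ signBit j x B = true := by
  unfold FP fpZero
  by_cases hs : signBit j x B = true
  · simp only [hs, if_true, Prod.Lex.lt_iff]
    norm_num
  · simp only [hs, if_false, Prod.Lex.lt_iff]
    simp only [Bool.not_eq_true] at hs
    simp [hs, not_lt.mpr (mag_nonneg j x B)]

lemma FP_true {j x : ℕ} {B : Fin (x + j + 1) → Bool} (h : signBit j x B = true) :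
    FP j x B = toLex ((0 : ℤ), -(mag j x B)) := by
  unfold FP; rw [if_pos h]

lemma FP_false {j x : ℕ} {B : Fin (x + j + 1) → Bool} (h : signBit j x B = false) :
    FP j x B = toLex ((1 : ℤ), mag j x B) := by
  unfold FP; rw [if_neg (by simp [h])]

lemma SI_true {j x : ℕ} {B : Fin (x + j + 1) → Bool} (h : signBit j x B = true) :
    SI B = -2 ^ (x + j) + (lowv j x B : ℤ) := by
  rw [SI_eq, if_pos (show B (Fin.last (x + j)) = true from h)]

lemma SI_false {j x : ℕ} {B : Fin (x + j + 1) → Bool} (h : signBit j x B = false) :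
    SI B = (lowv j x B : ℤ) := by
  rw [SI_eq, if_neg (by simp [show B (Fin.last (x + j)) = false from h])]

end FlintAux

/-- Case-split form of FLInt. -/
theorem flint_case_split (j x : ℕ) (hj : 1 ≤ j) (X Y : Fin (x + j + 1) → Bool) :
    ((FP j x X < fpZero ∧ FP j x Y < fpZero ∧ FP j x X ≠ FP j x Y) →
      (FP j x X ≥ FP j x Y ↔ SI X < SI Y)) ∧
    (¬(FP j x X < fpZero ∧ FP j x Y < fpZero ∧ FP j x X ≠ FP j x Y) →
      (FP j x X ≥ FP j x Y ↔ SI X ≥ SI Y)) := by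
  classical
  have hX2 := FlintAux.low_lt j x X
  have hY2 := FlintAux.low_lt j x Y
  constructor
  · rintro ⟨hX, hY, hne⟩
    have sX := (FlintAux.neg_iff j x X).mp hX
    have sY := (FlintAux.neg_iff j x Y).mp hY
    have hge : FP j x X ≥ FP j x Y ↔ FlintAux.lowv j x X ≤ FlintAux.lowv j x Y := by
      rw [ge_iff_le, FlintAux.FP_true sX, FlintAux.FP_true sY, Prod.Lex.le_iff]
      simp only [ofLex_toLex, lt_self_iff_false, false_or, true_and, neg_le_neg_iff]
      rw [FlintAux.mag_le_iff]
    have hnn : FlintAux.lowv j x X ≠ FlintAux.lowv j x Y := by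
      intro hEq
      apply hne
      rw [FlintAux.FP_true sX, FlintAux.FP_true sY,
        (FlintAux.mag_eq_iff j x X Y).mpr hEq]
    have hSI : SI X < SI Y ↔ FlintAux.lowv j x X < FlintAux.lowv j x Y := by
      rw [FlintAux.SI_true sX, FlintAux.SI_true sY, add_lt_add_iff_left, Nat.cast_lt]
    rw [hge, hSI]
    omega
  · intro h
    by_cases sX : signBit j x X = true <;> by_cases sY : signBit j x Y = true
    · -- both negative: FP values must be equal
      have hEq : FP j x X = FP j x Y := by
        by_contra hne
        exact h ⟨(FlintAux.neg_iff j x X).mpr sX, (FlintAux.neg_iff j x Y).mpr sY, hne⟩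
      have hl : FlintAux.lowv j x X = FlintAux.lowv j x Y := by
        rw [← FlintAux.mag_eq_iff j x X Y]
        rw [FlintAux.FP_true sX, FlintAux.FP_true sY, toLex_inj, Prod.mk.injEq] at hEq
        linarith [hEq.2]
      have hSI : SI X = SI Y := by
        rw [FlintAux.SI_true sX, FlintAux.SI_true sY, hl]
      simp [hEq, hSI, le_refl]
    · -- X negative, Y nonnegative
      simp only [Bool.not_eq_true] at sY
      have hge : ¬ (FP j x X ≥ FP j x Y) := by
        rw [ge_iff_le, FlintAux.FP_true sX, FlintAux.FP_false sY, Prod.Lex.le_iff]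
        norm_num
      have hSI : ¬ (SI X ≥ SI Y) := by
        rw [FlintAux.SI_true sX, FlintAux.SI_false sY]
        have h1 : (FlintAux.lowv j x X : ℤ) < 2 ^ (x + j) := by exact_mod_cast hX2
        have h2 : (0 : ℤ) ≤ (FlintAux.lowv j x Y : ℤ) := Nat.cast_nonneg _
        push_neg
        linarith
      simp [hge, hSI]
    · -- X nonnegative, Y negative
      simp only [Bool.not_eq_true] at sX
      have hge : FP j x X ≥ FP j x Y := by
        rw [ge_iff_le, FlintAux.FP_true sY, FlintAux.FP_false sX, Prod.Lex.le_iff]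
        norm_num
      have hSI : SI X ≥ SI Y := by
        rw [FlintAux.SI_true sY, FlintAux.SI_false sX]
        have h1 : (FlintAux.lowv j x Y : ℤ) < 2 ^ (x + j) := by exact_mod_cast hY2
        have h2 : (0 : ℤ) ≤ (FlintAux.lowv j x X : ℤ) := Nat.cast_nonneg _
        linarith
      simp [hge, hSI]
    · -- both nonnegative
      simp only [Bool.not_eq_true] at sX sY
      have hge : FP j x X ≥ FP j x Y ↔ FlintAux.lowv j x Y ≤ FlintAux.lowv j x X := by
        rw [ge_iff_le, FlintAux.FP_false sX, FlintAux.FP_false sY, Prod.Lex.le_iff]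
        simp only [ofLex_toLex, lt_self_iff_false, false_or, true_and]
        rw [FlintAux.mag_le_iff]
      have hSI : SI X ≥ SI Y ↔ FlintAux.lowv j x Y ≤ FlintAux.lowv j x X := by
        rw [ge_iff_le, FlintAux.SI_false sX, FlintAux.SI_false sY, Nat.cast_le]
      rw [hge, hSI]
end
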